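/- arXiv:1806.06135 — 4 statements merged into one kernel-verified Lean document; each statement's English description precedes it below -/
import Mathlib

section
/- Let n, S, I, SS, SI, II be real numbers with S, I, SS, SI, II > 0. If SI ≤ II·S/I and SS + SI = n·S, then SS·I/(SS·I + II·S) ≤ SS/(n·S); that is, the improved-closure probability p^{c_new}_{S|S-I} = [SS][I]/([SS][I]+[II][S]) is at most the unclustered-closure probability p^{uc}_{S|S-I} = [SS]/(n[S]). -/
/-- The improved-closure probability p^{c_new}_{S|S-I} = SS·I/(SS·I + II·S) is at
most the unclustered-closure probability p^{uc}_{S|S-I} = SS/(n·S), assuming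
SI ≤ II·S/I and the conservation relation SS + SI = n·S. -/
theorem improved_closure_prob_le_unclustered
    (n S I SS SI II : ℝ) (hS : 0 < S) (hI : 0 < I) (hSS : 0 < SS)
    (hSI : 0 < SI) (hII : 0 < II)
    (hcorr : SI ≤ II * S / I) (hcons : SS + SI = n * S) :
    SS * I / (SS * I + II * S) ≤ SS / (n * S) := by
  have h1 : SI * I ≤ II * S := (le_div_iff₀ hI).mp hcorr
  rw [← hcons]
  rw [div_le_div_iff₀ (by nlinarith) (by nlinarith)]
  nlinarith
end

section
/- Let τ, γ, n, φ, ξ, α be real numbers with n ≠ 0, α ≠ 0 and ξφ ≠ 0, and set δ = n(-1 + ξn(1-φ) + ξφα - α)/(ξφα). Then the equation 2τα - γδ + 2τξ(1/n)φα²δ - ταδ = 0 holds if and only if α satisfies the cubic equation (2τξφ(1-ξφ))α³ + (τξnφ - 2τξ²nφ(1-φ) - τn)α² + (-n(τ+γ) + τξn²(1-φ) + γξnφ)α + (γξn²(1-φ) - γn) = 0. -/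
/-!
Multiplying the δ-equation by ξφα clears the denominator of δ; the factor n in δ cancels the
1/n of the closure term, and what remains is exactly the negative of the cubic. Since ξφα ≠ 0,
the two equations are equivalent.
-/

lemma mul_steady_state_delta_eq_neg_cubic (τ γ n φ ξ α : ℝ) (hn : n ≠ 0) (hα : α ≠ 0)
    (hξφ : ξ * φ ≠ 0) :
    let δ := n * (-1 + ξ * n * (1 - φ) + ξ * φ * α - α) / (ξ * φ * α)
    ξ * φ * α * (2 * τ * α - γ * δ + 2 * τ * ξ * (1 / n) * φ * α ^ 2 * δ - τ * α * δ) =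
      -((2 * τ * ξ * φ * (1 - ξ * φ)) * α ^ 3
        + (τ * ξ * n * φ - 2 * τ * ξ ^ 2 * n * φ * (1 - φ) - τ * n) * α ^ 2
        + (-n * (τ + γ) + τ * ξ * n ^ 2 * (1 - φ) + γ * ξ * n * φ) * α
        + (γ * ξ * n ^ 2 * (1 - φ) - γ * n)) := by
  intro δ
  have hξ : ξ ≠ 0 := left_ne_zero_of_mul hξφ
  have hφ : φ ≠ 0 := right_ne_zero_of_mul hξφ
  simp only [δ]
  field_simp
  ring

/-- With δ = n(-1 + ξn(1-φ) + ξφα - α)/(ξφα), the steady-state equation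
2τα - γδ + 2τξ(1/n)φα²δ - ταδ = 0 holds iff α satisfies the cubic equation
for the simple-closure quasi-equilibrium. -/
theorem cubic_equation_for_alpha_simple_closure
    (τ γ n φ ξ α : ℝ) (hn : n ≠ 0) (hα : α ≠ 0) (hξφ : ξ * φ ≠ 0) :
    let δ := n * (-1 + ξ * n * (1 - φ) + ξ * φ * α - α) / (ξ * φ * α)
    (2 * τ * α - γ * δ + 2 * τ * ξ * (1 / n) * φ * α ^ 2 * δ - τ * α * δ = 0 ↔
      (2 * τ * ξ * φ * (1 - ξ * φ)) * α ^ 3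
        + (τ * ξ * n * φ - 2 * τ * ξ ^ 2 * n * φ * (1 - φ) - τ * n) * α ^ 2
        + (-n * (τ + γ) + τ * ξ * n ^ 2 * (1 - φ) + γ * ξ * n * φ) * α
        + (γ * ξ * n ^ 2 * (1 - φ) - γ * n) = 0) := by
  intro δ
  rw [← mul_right_inj' (mul_ne_zero hξφ hα), mul_zero,
    mul_steady_state_delta_eq_neg_cubic τ γ n φ ξ α hn hα hξφ, neg_eq_zero]
end

section
/- Let τ, γ, n, φ, α, δ be real numbers with γ ≠ 0, n ≠ 0 and ξ = (n-1)/n, and suppose Y := (τ+γ) + τ(ξ/n)αδφ ≠ 0. Let F be the 2×2 real matrix [[0, τ],[0, τ(n-1)(1-φ) + τξφα]] and V the 2×2 diagonal matrix [[γ,0],[0,Y]]. Then V is invertible and the characteristic polynomial of F·V⁻¹ is X·(X - R₀), where R₀ = (τn(n-1) - τ(n-1)(n-α)φ)/(n(τ+γ) + τξαδφ); in particular the eigenvalues of the next generation matrix F·V⁻¹ are 0 and R₀. -/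
open Polynomial

/-! Dividing by the diagonal matrix `V` rescales the columns of `F`, so `F V⁻¹` is again upper
triangular with first column zero; its characteristic polynomial is therefore `X (X - r)`, where
`r` is its lower-right entry. Multiplying numerator and denominator of `r` by `n` turns it into
the stated form of `R₀`. -/

namespace Matrix

theorem charpoly_upperTriangular_fin_two {R : Type*} [CommRing R] (a b d : R) :
    !![a, b; 0, d].charpoly = (X - C a) * (X - C d) := by
  rw [charpoly_of_isUpperTriangular _ (by
    intro i j hij; fin_cases i <;> fin_cases j <;> simp_all)]
  simp [Fin.prod_univ_two]

theorem mul_inv_diagonal_fin_two {K : Type*} [Field K] (a b c d : K) {p q : K}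
    (hp : p ≠ 0) (hq : q ≠ 0) :
    !![a, b; c, d] * (!![p, 0; 0, q])⁻¹ = !![a / p, b / q; c / p, d / q] := by
  rw [inv_eq_right_inv (B := !![p⁻¹, 0; 0, q⁻¹]) (by simp [hp, hq, one_fin_two])]
  simp [div_eq_mul_inv]

end Matrix

theorem pairwise_R₀_eq (τ γ n φ α δ : ℝ) (hn : n ≠ 0) :
    (τ * (n - 1) * (1 - φ) + τ * ((n - 1) / n) * φ * α)
        / ((τ + γ) + τ * ((n - 1) / n / n) * α * δ * φ)
      = (τ * n * (n - 1) - τ * (n - 1) * (n - α) * φ)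
        / (n * (τ + γ) + τ * ((n - 1) / n) * α * δ * φ) := by
  rw [← mul_div_mul_left _ _ hn]
  congr 1
  · field_simp
    ring
  · field_simp

/-- The next-generation-matrix computation for the pairwise model with the
simple closure: with F = [[0, τ],[0, τ(n-1)(1-φ) + τξφα]] and
V = diag(γ, (τ+γ) + τ(ξ/n)αδφ), V is invertible and the characteristic
polynomial of F·V⁻¹ is X(X - R₀) with
R₀ = (τn(n-1) - τ(n-1)(n-α)φ)/(n(τ+γ) + τξαδφ); in particular the eigenvalues
of the next generation matrix F·V⁻¹ are 0 and R₀. -/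
theorem next_generation_matrix_charpoly
    (τ γ n φ α δ : ℝ) (hγ : γ ≠ 0) (hn : n ≠ 0)
    (ξ : ℝ) (hξ : ξ = (n - 1) / n)
    (hY : (τ + γ) + τ * (ξ / n) * α * δ * φ ≠ 0) :
    let F : Matrix (Fin 2) (Fin 2) ℝ :=
      !![0, τ; 0, τ * (n - 1) * (1 - φ) + τ * ξ * φ * α]
    let V : Matrix (Fin 2) (Fin 2) ℝ :=
      !![γ, 0; 0, (τ + γ) + τ * (ξ / n) * α * δ * φ]
    let R₀ : ℝ := (τ * n * (n - 1) - τ * (n - 1) * (n - α) * φ)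
        / (n * (τ + γ) + τ * ξ * α * δ * φ)
    IsUnit V ∧
    (F * V⁻¹).charpoly = X * (X - C R₀) ∧
    (F * V⁻¹).charpoly.IsRoot 0 ∧ (F * V⁻¹).charpoly.IsRoot R₀ := by
  intro F V R₀
  have hV : IsUnit V := by
    rw [Matrix.isUnit_iff_isUnit_det, Matrix.det_fin_two_of, mul_zero, sub_zero]
    exact (mul_ne_zero hγ hY).isUnit
  have hcharpoly : (F * V⁻¹).charpoly = X * (X - C R₀) := by
    rw [Matrix.mul_inv_diagonal_fin_two _ _ _ _ hγ hY, zero_div,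
      Matrix.charpoly_upperTriangular_fin_two, map_zero, sub_zero, hξ,
      pairwise_R₀_eq _ _ _ _ _ _ hn]
    simp only [R₀, hξ]
  exact ⟨hV, hcharpoly, by simp [hcharpoly], by simp [hcharpoly]⟩
end

section
/- Let n > 2 be a real number. Then (2(n-1)/n²)·(2(n-1)(n-2)/(n-2)) > 4(n-1)(n-2)/((n-2)(n+2)); equivalently, 4(n-1)²/n² > 4(n-1)/(n+2). Consequently, in the limit γ → 0 the first-order clustering correction to the threshold for the simple closure exceeds that for the compact improved closure, so R₀^c < R₀^{cci} when n > 2, with equality of the two correction coefficients occurring only when n = 2. -/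
/-- In the limit γ → 0, the first-order clustering correction coefficient of
the simple-closure threshold exceeds that of the compact improved closure:
(2(n-1)/n²)·(2(n-1)(n-2)/(n-2)) > 4(n-1)(n-2)/((n-2)(n+2)), equivalently
4(n-1)²/n² > 4(n-1)/(n+2), for n > 2 (so R₀^c < R₀^{cci}); equality of the
two correction coefficients occurs only when n = 2. -/
theorem correction_coefficients_comparison (n : ℝ) (hn : 2 < n) :
    (2 * (n - 1) / n ^ 2) * (2 * (n - 1) * (n - 2) / (n - 2))
        > 4 * (n - 1) * (n - 2) / ((n - 2) * (n + 2)) ∧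
    4 * (n - 1) ^ 2 / n ^ 2 > 4 * (n - 1) / (n + 2) ∧
    (∀ m : ℝ, 2 ≤ m →
      (4 * (m - 1) ^ 2 / m ^ 2 = 4 * (m - 1) / (m + 2) ↔ m = 2)) := by
  have h0 : (0:ℝ) < n := by linarith
  have h2 : n - 2 ≠ 0 := by intro h; linarith [sub_eq_zero.mp h]
  have hp2 : (0:ℝ) < n + 2 := by linarith
  have key : 4 * (n - 1) ^ 2 / n ^ 2 > 4 * (n - 1) / (n + 2) := by
    rw [gt_iff_lt, div_lt_div_iff₀ hp2 (by positivity)]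
    nlinarith
  refine ⟨?_, key, ?_⟩
  · have e1 : (2 * (n - 1) / n ^ 2) * (2 * (n - 1) * (n - 2) / (n - 2))
        = 4 * (n - 1) ^ 2 / n ^ 2 := by field_simp; ring
    have e2 : 4 * (n - 1) * (n - 2) / ((n - 2) * (n + 2)) = 4 * (n - 1) / (n + 2) := by
      field_simp
    rw [e1, e2]; exact key
  · intro m hm
    constructor
    · intro h
      have hm0 : (0:ℝ) < m := by linarith
      have hmp2 : (0:ℝ) < m + 2 := by linarith
      have := (div_eq_div_iff (by positivity : (m:ℝ)^2 ≠ 0) (by positivity : (m:ℝ)+2 ≠ 0)).mp h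
      nlinarith
    · rintro rfl; norm_num
end
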